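/- There exist a sequence of finite games (Gₙ)_{n∈ℕ} with connecting game embeddings eₙ : Gₙ → G_{n+1} that is a Fraïssé sequence for the class of finite games, together with game embeddings fₙ : Gₙ → G_FL satisfying f_{n+1} ∘ eₙ = fₙ for all n, ⋃ₙ fₙ[Tₙ] = ω^{<ω}, and ⋃ₙ f̄ₙ[Aₙ] = c₀₀ (where Gₙ = (Tₙ, Aₙ)); in particular (fₙ) is a colimit cocone of the sequence in Games_A, so G_FL is the Fraïssé limit of the class of finite games with game embeddings. -/

import Mathlib

/-!
The sequence is `Gₙ = (Tₙ, c₀₀ ∩ Run(Tₙ))`, where `Tₙ` consists of the sequences whose entries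
before position `n` are at most `n` and which are constant `0` or `1` from position `n` on. The
connecting maps and the maps into `G_FL` are inclusions; every finite sequence and every
eventually-zero run lies in some `Gₙ`, which makes `G_FL` the colimit.

A finite game `H` has a level `N` beyond which each node lies on a single run. It embeds into `Gₘ`
for `m ≥ N` entry by entry: a node of length at most `m` is sent to a small code that separates it
from its siblings, and from level `m` on every entry is `0` or `1` according to whether the run
through the node is won. For amalgamation along `f : Gₙ → H`, nodes in the image of `f` are coded by
the last entry of their preimage and all other nodes by numbers above `n + 1`; the codes still
separate siblings, and the resulting embedding inverts `f`.
-/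

universe u v w x y

namespace FraisseGames

/-- The initial segment (of length `n`) of an infinite sequence `R`. -/
def runPrefix {M : Type u} (R : ℕ → M) (n : ℕ) : List M :=
  (List.range n).map R

/-- `T` is a game tree over `M`: it is closed under initial segments, and every
moment of `T` has a one-step extension in `T`. -/
def IsGameTree {M : Type u} (T : Set (List M)) : Prop :=
  (∀ t ∈ T, ∀ k : ℕ, t.take k ∈ T) ∧ ∀ t ∈ T, ∃ x : M, t ++ [x] ∈ T

/-- The set of runs of the tree `T`. -/
def Runs {M : Type u} (T : Set (List M)) : Set (ℕ → M) :=
  {R | ∀ n : ℕ, runPrefix R n ∈ T}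

/-- A game over `M`: a game tree together with a payoff set of runs. -/
structure Game (M : Type u) : Type u where
  tree : Set (List M)
  isGameTree : IsGameTree tree
  payoff : Set (ℕ → M)
  payoff_subset : payoff ⊆ Runs tree

/-- A game is finite if its set of runs is finite. -/
def Game.IsFin {M : Type u} (G : Game M) : Prop := (Runs G.tree).Finite

/-- The subgame relation `G ≤ G'`. -/
def Game.Sub {M : Type u} (G G' : Game M) : Prop :=
  G.tree ⊆ G'.tree ∧ G.payoff = G'.payoff ∩ Runs G.tree

/-- `f` is a chronological map from `T₁` to `T₂`: it maps `T₁` into `T₂` and it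
preserves lengths and truncations of moments. -/
def Chronological {M₁ : Type u} {M₂ : Type v} (T₁ : Set (List M₁)) (T₂ : Set (List M₂))
    (f : List M₁ → List M₂) : Prop :=
  (∀ t ∈ T₁, f t ∈ T₂) ∧ (∀ t ∈ T₁, (f t).length = t.length) ∧
    ∀ t ∈ T₁, ∀ k : ℕ, f (t.take k) = (f t).take k

/-- `BarMapsTo f R S` says that the map `f̄` on runs induced by the chronological
map `f` sends the run `R` to the run `S`, i.e. `S↾n = f (R↾n)` for all `n`. -/
def BarMapsTo {M₁ : Type u} {M₂ : Type v} (f : List M₁ → List M₂)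
    (R : ℕ → M₁) (S : ℕ → M₂) : Prop :=
  ∀ n : ℕ, runPrefix S n = f (runPrefix R n)

/-- `f` is an A-morphism from `G₁` to `G₂`: a chronological map whose induced map on
runs sends runs won by Ali to runs won by Ali. -/
def IsAMorphism {M₁ : Type u} {M₂ : Type v} (G₁ : Game M₁) (G₂ : Game M₂)
    (f : List M₁ → List M₂) : Prop :=
  Chronological G₁.tree G₂.tree f ∧
    ∀ R ∈ G₁.payoff, ∀ S : ℕ → M₂, BarMapsTo f R S → S ∈ G₂.payoff

/-- `f` is a game embedding from `G₁` to `G₂`: a chronological map, injective on the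
tree, such that for every run `R` of `G₁`, `R ∈ A₁ ↔ f̄ R ∈ A₂`. -/
def IsGameEmbedding {M₁ : Type u} {M₂ : Type v} (G₁ : Game M₁) (G₂ : Game M₂)
    (f : List M₁ → List M₂) : Prop :=
  Chronological G₁.tree G₂.tree f ∧
    (∀ t ∈ G₁.tree, ∀ s ∈ G₁.tree, f t = f s → t = s) ∧
    ∀ R ∈ Runs G₁.tree, ∀ S : ℕ → M₂, BarMapsTo f R S → (R ∈ G₁.payoff ↔ S ∈ G₂.payoff)

/-- `f` is an isomorphism of games from `G₁` onto `G₂`: a game embedding that is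
surjective onto the tree of `G₂`. -/
def IsGameIso {M₁ : Type u} {M₂ : Type v} (G₁ : Game M₁) (G₂ : Game M₂)
    (f : List M₁ → List M₂) : Prop :=
  IsGameEmbedding G₁ G₂ f ∧ ∀ s ∈ G₂.tree, ∃ t ∈ G₁.tree, f t = s

/-- The set of eventually-zero infinite sequences of natural numbers. -/
def c00 : Set (ℕ → ℕ) := {R | ∃ N : ℕ, ∀ n ≥ N, R n = 0}

/-- The game `G_FL = (ω^{<ω}, c₀₀)`. -/
def GFL : Game ℕ where
  tree := Set.univ
  isGameTree := ⟨fun _ _ _ => trivial, fun _ _ => ⟨0, trivial⟩⟩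
  payoff := c00
  payoff_subset := fun _ _ _ => trivial

/-- The universal property of a colimit cocone in the category `Games_A` of games and
A-morphisms: every cocone of A-morphisms over the sequence factors through `q`
via a unique (up to agreement on the tree) A-morphism.  (Morphisms of `Games_A` are
identified when they agree on the game tree.) -/
def IsGamesACoconeColimit.{u', v', w'} {MS : ℕ → Type u'} (S : ∀ n, Game (MS n))
    (s : ∀ n, List (MS n) → List (MS (n + 1)))
    {N : Type v'} (L : Game N) (q : ∀ n, List (MS n) → List N) : Prop :=
  ∀ (P : Type w') (H : Game P) (h : ∀ n, List (MS n) → List P),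
    (∀ n, IsAMorphism (S n) H (h n)) →
    (∀ n, ∀ t ∈ (S n).tree, h (n + 1) (s n t) = h n t) →
    ∃ k : List N → List P, IsAMorphism L H k ∧
      (∀ n, ∀ t ∈ (S n).tree, k (q n t) = h n t) ∧
      ∀ k' : List N → List P, IsAMorphism L H k' →
        (∀ n, ∀ t ∈ (S n).tree, k' (q n t) = h n t) →
        ∀ t ∈ L.tree, k' t = k t

/-- `iterComp e n m` is the composite `e_{n,m} = e_{m-1} ∘ ⋯ ∘ eₙ` of the connecting
maps of a sequence (equal to the identity when `m ≤ n`). -/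
def iterComp {α : Type u} (e : ℕ → α → α) (n : ℕ) : ℕ → α → α
  | 0 => id
  | m + 1 => if n ≤ m then e m ∘ iterComp e n m else id

section Lists

variable {α : Type u}

lemma getLastD_eq_getD (l : List α) (d : α) : l.getLastD d = l.getD (l.length - 1) d := by
  simp [List.getLastD_eq_getLast?, List.getLast?_eq_getElem?]

lemma eq_of_dropLast_eq_of_getLastD_eq {l₁ l₂ : List α} {d : α} (hlen : l₁.length = l₂.length)
    (h₁ : l₁.dropLast = l₂.dropLast) (h₂ : l₁.getLastD d = l₂.getLastD d) : l₁ = l₂ := by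
  rcases eq_or_ne l₁ [] with rfl | hne₁
  · exact (List.length_eq_zero_iff.mp hlen.symm).symm
  have hne₂ : l₂ ≠ [] := List.ne_nil_of_length_pos (hlen ▸ List.length_pos_of_ne_nil hne₁)
  simp only [List.getLastD_eq_getLast?, List.getLast?_eq_some_getLast hne₁,
    List.getLast?_eq_some_getLast hne₂, Option.getD_some] at h₂
  rw [← List.dropLast_append_getLast hne₁, ← List.dropLast_append_getLast hne₂, h₁, h₂]

end Lists

section RunPrefix

variable {M : Type u}

@[simp] lemma runPrefix_length (R : ℕ → M) (n : ℕ) : (runPrefix R n).length = n := by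
  simp [runPrefix]

@[simp] lemma runPrefix_getElem (R : ℕ → M) {n i : ℕ} (h : i < (runPrefix R n).length) :
    (runPrefix R n)[i] = R i := by
  simp [runPrefix]

lemma runPrefix_getD (R : ℕ → M) {n i : ℕ} (h : i < n) (d : M) :
    (runPrefix R n).getD i d = R i := by
  simp [runPrefix, h]

lemma runPrefix_take (R : ℕ → M) (n k : ℕ) : (runPrefix R n).take k = runPrefix R (min k n) := by
  simp [runPrefix, ← List.map_take]

lemma runPrefix_take_of_le (R : ℕ → M) {n k : ℕ} (h : k ≤ n) :
    (runPrefix R n).take k = runPrefix R k := by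
  rw [runPrefix_take, min_eq_left h]

lemma runPrefix_succ (R : ℕ → M) (n : ℕ) : runPrefix R (n + 1) = runPrefix R n ++ [R n] := by
  simp [runPrefix, List.range_succ]

lemma runPrefix_eq_runPrefix_iff {R S : ℕ → M} {n : ℕ} :
    runPrefix R n = runPrefix S n ↔ ∀ i < n, R i = S i := by
  simp [runPrefix, List.map_inj_left]

lemma runPrefix_getD_length (t : List M) (d : M) : runPrefix (t.getD · d) t.length = t := by
  apply List.ext_getElem (by simp)
  intro i _ hi
  simp [hi]

end RunPrefix

section Runs

variable {M : Type u} {M₁ : Type u} {M₂ : Type v}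

lemma IsGameTree.exists_run_through {T : Set (List M)} (hT : IsGameTree T) {t : List M}
    (ht : t ∈ T) : ∃ R ∈ Runs T, runPrefix R t.length = t := by
  choose next hnext using hT.2
  let w : ℕ → T := fun k => (fun s : T => ⟨s.1 ++ [next s.1 s.2], hnext _ s.2⟩)^[k] ⟨t, ht⟩
  have hw_succ (k : ℕ) : (w (k + 1)).1 = (w k).1 ++ [next _ (w k).2] :=
    congrArg Subtype.val (Function.iterate_succ_apply' _ _ _)
  have hw_length (k : ℕ) : (w k).1.length = t.length + k := by
    induction k with
    | zero => rfl
    | succ k ih => rw [hw_succ, List.length_append, ih]; rfl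
  have hw_prefix (j k : ℕ) (hjk : j ≤ k) : (w j).1 <+: (w k).1 := by
    induction k, hjk using Nat.le_induction with
    | base => exact List.prefix_rfl
    | succ k _ ih => exact ih.trans (by rw [hw_succ]; exact List.prefix_append _ _)
  have hlt (i : ℕ) : i < (w (i + 1)).1.length := by rw [hw_length]; omega
  let R : ℕ → M := fun i => (w (i + 1)).1[i]'(hlt i)
  have hR (k : ℕ) : runPrefix R k = (w k).1.take k := by
    apply List.ext_getElem (by simp [hw_length])
    intro i hi _
    simp only [runPrefix_getElem, List.getElem_take]
    exact (hw_prefix (i + 1) k (by simpa using hi)).getElem (hlt i)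
  refine ⟨R, fun k => ?_, ?_⟩
  · rw [hR]
    exact hT.1 _ (w k).2 k
  · rw [hR]
    exact (List.prefix_iff_eq_take.mp (hw_prefix 0 t.length (Nat.zero_le _))).symm

lemma exists_injOn_runPrefix {T : Set (List M)} (hT : (Runs T).Finite) :
    ∃ N, Set.InjOn (runPrefix · N) (Runs T) := by
  classical
  have hsep (R R' : ℕ → M) (h : R ≠ R') : ∃ i, R i ≠ R' i := Function.ne_iff.mp h
  let level (R R' : ℕ → M) : ℕ := if h : R = R' then 0 else Nat.find (hsep R R' h) + 1
  obtain ⟨N, hN⟩ := (hT.image2 level hT).bddAbove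
  refine ⟨N, fun R hR R' hR' hRR' => by_contra fun hne => ?_⟩
  have hle : level R R' ≤ N := hN (Set.mem_image2_of_mem hR hR')
  simp only [level, dif_neg hne] at hle
  exact Nat.find_spec (hsep R R' hne) (runPrefix_eq_runPrefix_iff.mp hRR' _ (by omega))

lemma injOn_runPrefix_of_le {S : Set (ℕ → M)} {N l : ℕ} (hN : Set.InjOn (runPrefix · N) S)
    (hl : N ≤ l) : Set.InjOn (runPrefix · l) S := fun R hR R' hR' h =>
  hN hR hR' (by simpa only [runPrefix_take_of_le _ hl] using congrArg (List.take N) h)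

lemma barMapsTo_id_iff {R S : ℕ → M} : BarMapsTo id R S ↔ S = R := by
  refine ⟨fun h => funext fun i => ?_, fun h => h ▸ fun _ => rfl⟩
  exact runPrefix_eq_runPrefix_iff.mp (h (i + 1)) i (Nat.lt_succ_self i)

lemma BarMapsTo.mem_runs {T₁ : Set (List M₁)} {T₂ : Set (List M₂)} {f : List M₁ → List M₂}
    (hf : Chronological T₁ T₂ f) {R : ℕ → M₁} {S : ℕ → M₂} (h : BarMapsTo f R S)
    (hR : R ∈ Runs T₁) : S ∈ Runs T₂ := fun n => h n ▸ hf.1 _ (hR n)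

lemma Chronological.exists_barMapsTo {T₁ : Set (List M₁)} {T₂ : Set (List M₂)}
    {f : List M₁ → List M₂} (hf : Chronological T₁ T₂ f) {R : ℕ → M₁} (hR : R ∈ Runs T₁) :
    ∃ S, BarMapsTo f R S := by
  have hlength (n : ℕ) : (f (runPrefix R n)).length = n := by rw [hf.2.1 _ (hR n)]; simp
  have hprefix {i n : ℕ} (h : i + 1 ≤ n) :
      f (runPrefix R (i + 1)) = (f (runPrefix R n)).take (i + 1) := by
    rw [← hf.2.2 _ (hR n), runPrefix_take_of_le _ h]
  refine ⟨fun i => (f (runPrefix R (i + 1)))[i]'(by rw [hlength]; omega), fun n => ?_⟩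
  apply List.ext_getElem (by simp [hlength])
  intro i hi _
  simp only [runPrefix_getElem, List.getElem_of_eq (hprefix (by simpa using hi)), List.getElem_take]

lemma IsGameTree.dropLast_mem {T : Set (List M)} (hT : IsGameTree T) {t : List M} (ht : t ∈ T) :
    t.dropLast ∈ T := by
  rw [List.dropLast_eq_take]
  exact hT.1 t ht _

lemma Chronological.map_dropLast {T₁ : Set (List M₁)} {T₂ : Set (List M₂)} {f : List M₁ → List M₂}
    (hf : Chronological T₁ T₂ f) {t : List M₁} (ht : t ∈ T₁) : f t.dropLast = (f t).dropLast := by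
  rw [List.dropLast_eq_take, hf.2.2 t ht, ← hf.2.1 t ht, ← List.dropLast_eq_take]

lemma IsGameEmbedding.eq_of_dropLast_apply_eq {G : Game M₁} {H : Game M₂} {f : List M₁ → List M₂}
    (hf : IsGameEmbedding G H f) {p q : List M₁} (hp : p ∈ G.tree) (hq : q ∈ G.tree)
    (hlen : p.length = q.length) (hdrop : (f p).dropLast = (f q).dropLast) {d : M₁}
    (hlast : p.getLastD d = q.getLastD d) : p = q := by
  refine eq_of_dropLast_eq_of_getLastD_eq hlen ?_ hlast
  refine hf.2.1 _ (G.isGameTree.dropLast_mem hp) _ (G.isGameTree.dropLast_mem hq) ?_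
  rw [hf.1.map_dropLast hp, hf.1.map_dropLast hq, hdrop]

end Runs

section FiniteGames

variable {M : Type u}

lemma Game.exists_levelCode (H : Game M) (hH : H.IsFin) :
    ∃ (r : ℕ) (c : List M → ℕ), (∀ t ∈ H.tree, c t < r) ∧
      ∀ t ∈ H.tree, ∀ s ∈ H.tree, t.length = s.length → c t = c s → t = s := by
  classical
  let runs := hH.toFinset.toList
  let c (t : List M) : ℕ := runs.findIdx (fun R => runPrefix R t.length = t)
  have hc (t : List M) (ht : t ∈ H.tree) :
      ∃ h : c t < runs.length, runPrefix runs[c t] t.length = t := by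
    obtain ⟨R, hR, hRt⟩ := H.isGameTree.exists_run_through ht
    have hR' : R ∈ runs := by simpa [runs] using hH.mem_toFinset.mpr hR
    have h : c t < runs.length := List.findIdx_lt_length_of_exists ⟨R, hR', by simpa using hRt⟩
    exact ⟨h, by simpa using List.findIdx_getElem (w := h)⟩
  refine ⟨runs.length, c, fun t ht => (hc t ht).1, fun t ht s hs hlen hcts => ?_⟩
  obtain ⟨ht₁, ht₂⟩ := hc t ht
  obtain ⟨hs₁, hs₂⟩ := hc s hs
  rw [← ht₂, ← hs₂, hlen]
  simp only [hcts]

noncomputable def Game.lossIndicator (H : Game M) (t : List M) : ℕ := by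
  classical exact if ∃ R ∈ H.payoff, runPrefix R t.length = t then 0 else 1

open Classical in
lemma Game.lossIndicator_runPrefix (H : Game M) {l : ℕ}
    (hl : Set.InjOn (runPrefix · l) (Runs H.tree)) {R : ℕ → M} (hR : R ∈ Runs H.tree) :
    H.lossIndicator (runPrefix R l) = if R ∈ H.payoff then 0 else 1 := by
  have hwon : (∃ R' ∈ H.payoff, runPrefix R' l = runPrefix R l) ↔ R ∈ H.payoff :=
    ⟨fun ⟨R', hR', h⟩ => hl (H.payoff_subset hR') hR h ▸ hR', fun h => ⟨R, h, rfl⟩⟩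
  simp only [Game.lossIndicator, runPrefix_length, hwon]

end FiniteGames

section PrefixMap

variable {M₁ : Type u} {M₂ : Type v}

def prefixMap (E : List M₁ → M₂) (t : List M₁) : List M₂ :=
  runPrefix (fun i => E (t.take (i + 1))) t.length

variable (E : List M₁ → M₂)

@[simp] lemma prefixMap_length (t : List M₁) : (prefixMap E t).length = t.length :=
  runPrefix_length _ _

@[simp] lemma prefixMap_getElem (t : List M₁) {i : ℕ} (h : i < (prefixMap E t).length) :
    (prefixMap E t)[i] = E (t.take (i + 1)) :=
  runPrefix_getElem _ h

lemma prefixMap_take (t : List M₁) (k : ℕ) : prefixMap E (t.take k) = (prefixMap E t).take k := by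
  apply List.ext_getElem (by simp)
  intro i hi _
  simp only [prefixMap_getElem, List.getElem_take, List.take_take]
  congr 2
  simp at hi
  omega

lemma chronological_prefixMap {T₁ : Set (List M₁)} {T₂ : Set (List M₂)}
    (h : ∀ t ∈ T₁, prefixMap E t ∈ T₂) : Chronological T₁ T₂ (prefixMap E) :=
  ⟨h, fun t _ => prefixMap_length E t, fun t _ k => prefixMap_take E t k⟩

lemma barMapsTo_prefixMap_iff {R : ℕ → M₁} {S : ℕ → M₂} :
    BarMapsTo (prefixMap E) R S ↔ ∀ i, S i = E (runPrefix R (i + 1)) := by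
  refine ⟨fun h i => ?_, fun h n => ?_⟩
  · have hi : i < (runPrefix S (i + 1)).length := by simp
    rw [← runPrefix_getElem S hi, List.getElem_of_eq (h (i + 1)) hi, prefixMap_getElem,
      List.take_of_length_le (by simp)]
  · apply List.ext_getElem (by simp [prefixMap])
    intro i hi _
    have hi' : i + 1 ≤ n := by simpa using hi
    simp only [runPrefix_getElem, prefixMap_getElem, h, runPrefix_take_of_le R hi']

end PrefixMap

section FraisseSequence

def FraisseCond (n : ℕ) (R : ℕ → ℕ) (i : ℕ) : Prop :=
  (i < n → R i ≤ n) ∧ (n ≤ i → R i ≤ 1 ∧ R i = R n)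

def fraisseTree (n : ℕ) : Set (List ℕ) :=
  {t | ∀ i < t.length, FraisseCond n (t.getD · 0) i}

lemma runPrefix_mem_fraisseTree_iff {n k : ℕ} {R : ℕ → ℕ} :
    runPrefix R k ∈ fraisseTree n ↔ ∀ i < k, FraisseCond n R i := by
  simp only [fraisseTree, Set.mem_ofPred_eq, runPrefix_length]
  refine forall₂_congr fun i hi => ?_
  have hn (hni : n ≤ i) : (runPrefix R k).getD n 0 = R n := runPrefix_getD _ (by omega) 0
  simp only [FraisseCond, runPrefix_getD _ hi]
  exact and_congr_right' (imp_congr_right fun hni => by rw [hn hni])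

lemma mem_runs_fraisseTree_iff {n : ℕ} {R : ℕ → ℕ} :
    R ∈ Runs (fraisseTree n) ↔ ∀ i, FraisseCond n R i := by
  simp only [Runs, Set.mem_ofPred_eq, runPrefix_mem_fraisseTree_iff]
  exact ⟨fun h i => h (i + 1) i (Nat.lt_succ_self i), fun h _ i _ => h i⟩

lemma exists_mem_runs_fraisseTree_runPrefix_eq {n : ℕ} {t : List ℕ} (ht : t ∈ fraisseTree n) :
    ∃ R ∈ Runs (fraisseTree n), runPrefix R t.length = t := by
  let R (j : ℕ) : ℕ := if j < t.length then t.getD j 0 else t.getD n 0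
  have hRn : R n = t.getD n 0 := by by_cases h : n < t.length <;> simp [R, h]
  refine ⟨R, mem_runs_fraisseTree_iff.mpr fun i => ?_, ?_⟩
  · by_cases hi : i < t.length
    · simpa only [FraisseCond, R, if_pos hi, hRn] using ht i hi
    · have hcond := ht n
      simp only [FraisseCond, R, if_neg hi, hRn] at hcond ⊢
      by_cases hn : n < t.length
      · exact ⟨by omega, fun _ => ⟨(hcond hn).2 le_rfl |>.1, trivial⟩⟩
      · simp [hn]
  · conv_rhs => rw [← runPrefix_getD_length t 0]
    exact runPrefix_eq_runPrefix_iff.mpr fun i hi => if_pos hi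

lemma isGameTree_fraisseTree (n : ℕ) : IsGameTree (fraisseTree n) := by
  constructor
  · intro t ht k
    obtain ⟨R, hR, hRt⟩ := exists_mem_runs_fraisseTree_runPrefix_eq ht
    rw [← hRt, runPrefix_take]
    exact hR _
  · intro t ht
    obtain ⟨R, hR, hRt⟩ := exists_mem_runs_fraisseTree_runPrefix_eq ht
    rw [← hRt]
    exact ⟨R t.length, by simpa [← runPrefix_succ] using hR _⟩

lemma fraisseCond_of_le {a b : ℕ} (hab : a ≤ b) {R : ℕ → ℕ} (hR : ∀ i, FraisseCond a R i) (i : ℕ) :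
    FraisseCond b R i := by
  have hb := (hR b).2 hab
  refine ⟨fun hib => ?_, fun hbi => ⟨((hR i).2 (hab.trans hbi)).1, ?_⟩⟩
  · rcases lt_or_ge i a with hia | hia
    · exact ((hR i).1 hia).trans hab
    · exact ((hR i).2 hia).1.trans (by omega)
  · rw [((hR i).2 (hab.trans hbi)).2, hb.2]

lemma fraisseTree_mono {a b : ℕ} (hab : a ≤ b) : fraisseTree a ⊆ fraisseTree b := by
  intro t ht
  obtain ⟨R, hR, hRt⟩ := exists_mem_runs_fraisseTree_runPrefix_eq ht
  rw [← hRt, runPrefix_mem_fraisseTree_iff]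
  exact fun i _ => fraisseCond_of_le hab (mem_runs_fraisseTree_iff.mp hR) i

lemma mem_fraisseTree_length_add_sum (t : List ℕ) : t ∈ fraisseTree (t.length + t.sum) := by
  intro i hi
  refine ⟨fun _ => ?_, fun h => absurd hi (by omega)⟩
  simpa [hi] using (List.le_sum_of_mem (List.getElem_mem hi)).trans (Nat.le_add_left _ _)

lemma iUnion_fraisseTree : ⋃ n, fraisseTree n = Set.univ :=
  Set.eq_univ_of_forall fun t => Set.mem_iUnion.mpr ⟨_, mem_fraisseTree_length_add_sum t⟩

lemma runs_fraisseTree_finite (n : ℕ) : (Runs (fraisseTree n)).Finite := by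
  let restrict (R : ℕ → ℕ) (i : Fin (n + 1)) : ℕ := R i
  refine Set.Finite.of_finite_image (f := restrict) ?_ fun R hR R' hR' h => funext fun i => ?_
  · refine (Set.Finite.pi (t := fun _ => Set.Iic (n + 1)) fun _ => Set.finite_Iic _).subset ?_
    rintro _ ⟨R, hR, rfl⟩ i _
    have := mem_runs_fraisseTree_iff.mp hR i
    rcases lt_or_ge (i : ℕ) n with hi | hi
    · exact (this.1 hi).trans (Nat.le_succ n)
    · exact (this.2 hi).1.trans (by omega)
  · have hRR' (j : ℕ) (hj : j ≤ n) : R j = R' j := congrFun h ⟨j, Nat.lt_succ_of_le hj⟩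
    rcases le_or_gt i n with hi | hi
    · exact hRR' i hi
    · rw [((mem_runs_fraisseTree_iff.mp hR i).2 hi.le).2,
        ((mem_runs_fraisseTree_iff.mp hR' i).2 hi.le).2, hRR' n le_rfl]

open Classical in
lemma ite_mem_c00_eq {n : ℕ} {R : ℕ → ℕ} (hR : R ∈ Runs (fraisseTree n)) {i : ℕ} (hi : n ≤ i) :
    (if R ∈ c00 then 0 else 1) = R i := by
  have hcond := mem_runs_fraisseTree_iff.mp hR
  have htail (j : ℕ) (hj : n ≤ j) : R j = R i := ((hcond j).2 hj).2.trans ((hcond i).2 hi).2.symm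
  have hc00 : R ∈ c00 ↔ R i = 0 :=
    ⟨fun ⟨N, hN⟩ => (htail (max n N) (le_max_left _ _)).symm.trans (hN _ (le_max_right _ _)),
      fun h => ⟨n, fun j hj => (htail j hj).trans h⟩⟩
  have := ((hcond i).2 hi).1
  by_cases h : R i = 0
  · simp [hc00, h]
  · simp only [hc00, h, if_false]
    omega

def fraisseGame (n : ℕ) : Game ℕ where
  tree := fraisseTree n
  isGameTree := isGameTree_fraisseTree n
  payoff := c00 ∩ Runs (fraisseTree n)
  payoff_subset := Set.inter_subset_right

lemma fraisseGame_isFin (n : ℕ) : (fraisseGame n).IsFin := runs_fraisseTree_finite n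

lemma fraisseGame_sub_of_le {a b : ℕ} (hab : a ≤ b) : (fraisseGame a).Sub (fraisseGame b) := by
  refine ⟨fraisseTree_mono hab, ?_⟩
  have : Runs (fraisseTree a) ⊆ Runs (fraisseTree b) := fun _ hR k => fraisseTree_mono hab (hR k)
  simp only [fraisseGame, Set.inter_assoc, Set.inter_eq_right.mpr this]

lemma fraisseGame_sub_GFL (n : ℕ) : (fraisseGame n).Sub GFL :=
  ⟨Set.subset_univ _, rfl⟩

lemma exists_mem_fraisseGame_payoff {R : ℕ → ℕ} (hR : R ∈ c00) :
    ∃ n, R ∈ (fraisseGame n).payoff := by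
  obtain ⟨N, hN⟩ := hR
  let n := N + ∑ i ∈ Finset.range N, R i
  refine ⟨n, ⟨N, hN⟩, mem_runs_fraisseTree_iff.mpr fun i => ⟨fun _ => ?_, fun hi => ?_⟩⟩
  · rcases lt_or_ge i N with hiN | hiN
    · exact (Finset.single_le_sum (fun _ _ => Nat.zero_le _) (Finset.mem_range.mpr hiN)).trans
        (Nat.le_add_left _ _)
    · simp [hN i hiN]
  · simp [hN i (by omega), hN n (by omega)]

end FraisseSequence

section Embeddings

variable {M : Type u}

lemma Game.Sub.isGameEmbedding_id {G G' : Game M} (h : G.Sub G') : IsGameEmbedding G G' id := by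
  refine ⟨⟨h.1, fun _ _ => rfl, fun _ _ _ => rfl⟩, fun _ _ _ _ => id, fun R hR S hS => ?_⟩
  rw [barMapsTo_id_iff.mp hS, h.2]
  exact ⟨fun hR' => hR'.1, fun hR' => ⟨hR', hR⟩⟩

lemma take_eq_of_prefixMap_eq {T : Set (List M)} (hT : IsGameTree T) {E : List M → ℕ} {m : ℕ}
    (hinj : ∀ u ∈ T, ∀ v ∈ T, u.length ≤ m → u.length = v.length →
      u.dropLast = v.dropLast → E u = E v → u = v)
    {t s : List M} (ht : t ∈ T) (hs : s ∈ T) (h : prefixMap E t = prefixMap E s) {k : ℕ}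
    (hkm : k ≤ m) (hkt : k ≤ t.length) : t.take k = s.take k := by
  have hlen : t.length = s.length := by simpa using congrArg List.length h
  induction k with
  | zero => simp
  | succ k ih =>
    have hE : E (t.take (k + 1)) = E (s.take (k + 1)) := by
      have hk : k < (prefixMap E t).length := by simp; omega
      simpa using List.getElem_of_eq h hk
    refine hinj _ (hT.1 t ht _) _ (hT.1 s hs _) (by simp; omega) (by simp [hlen]) ?_ hE
    simp only [List.dropLast_eq_take, List.length_take, List.take_take]
    rw [show min (min (k + 1) t.length - 1) (k + 1) = k by omega,
      show min (min (k + 1) s.length - 1) (k + 1) = k by omega]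
    exact ih (by omega) (by omega)

lemma injOn_prefixMap (H : Game M) {m : ℕ} (hsep : Set.InjOn (runPrefix · m) (Runs H.tree))
    {E : List M → ℕ} (hinj : ∀ u ∈ H.tree, ∀ v ∈ H.tree, u.length ≤ m → u.length = v.length →
      u.dropLast = v.dropLast → E u = E v → u = v) :
    Set.InjOn (prefixMap E) H.tree := by
  intro t ht s hs h
  have hlen : t.length = s.length := by simpa using congrArg List.length h
  have htake {k : ℕ} (hkm : k ≤ m) (hkt : k ≤ t.length) : t.take k = s.take k :=
    take_eq_of_prefixMap_eq H.isGameTree hinj ht hs h hkm hkt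
  rcases le_or_gt t.length m with htm | hmt
  · calc t = t.take t.length := List.take_length.symm
      _ = s.take t.length := htake htm le_rfl
      _ = s := by rw [hlen, List.take_length]
  obtain ⟨Rt, hRt, hRtt⟩ := H.isGameTree.exists_run_through ht
  obtain ⟨Rs, hRs, hRss⟩ := H.isGameTree.exists_run_through hs
  have hRts : Rt = Rs := hsep hRt hRs <| by
    dsimp only
    rw [← runPrefix_take_of_le Rt hmt.le, hRtt, htake le_rfl hmt.le, ← hRss,
      runPrefix_take_of_le Rs (hlen ▸ hmt.le)]
  rw [← hRtt, ← hRss, hRts, hlen]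

theorem isGameEmbedding_prefixMap_fraisseGame (H : Game M) {m : ℕ}
    (hsep : Set.InjOn (runPrefix · m) (Runs H.tree)) (E : List M → ℕ)
    (hbound : ∀ u ∈ H.tree, u.length ≤ m → E u ≤ m)
    (hinj : ∀ u ∈ H.tree, ∀ v ∈ H.tree, u.length ≤ m → u.length = v.length →
      u.dropLast = v.dropLast → E u = E v → u = v)
    (htail : ∀ u ∈ H.tree, m < u.length → E u = H.lossIndicator u) :
    IsGameEmbedding H (fraisseGame m) (prefixMap E) := by
  classical
  have hval {R : ℕ → M} (hR : R ∈ Runs H.tree) {i : ℕ} (hi : m ≤ i) :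
      E (runPrefix R (i + 1)) = if R ∈ H.payoff then 0 else 1 := by
    rw [htail _ (hR _) (by simp; omega),
      H.lossIndicator_runPrefix (injOn_runPrefix_of_le hsep (by omega)) hR]
  have hrun {R : ℕ → M} (hR : R ∈ Runs H.tree) :
      (fun i => E (runPrefix R (i + 1))) ∈ Runs (fraisseTree m) := by
    refine mem_runs_fraisseTree_iff.mpr fun i => ⟨fun hi => hbound _ (hR _) (by simp; omega),
      fun hi => ?_⟩
    simp only [hval hR hi, hval hR le_rfl, and_true]
    split_ifs <;> simp
  have hbar (R : ℕ → M) : BarMapsTo (prefixMap E) R (fun i => E (runPrefix R (i + 1))) :=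
    (barMapsTo_prefixMap_iff E).mpr fun _ => rfl
  have hmem (t : List M) (ht : t ∈ H.tree) : prefixMap E t ∈ fraisseTree m := by
    obtain ⟨R, hR, hRt⟩ := H.isGameTree.exists_run_through ht
    rw [← hRt, ← hbar R t.length]
    exact hrun hR _
  refine ⟨chronological_prefixMap E hmem, fun t ht s hs h => injOn_prefixMap H hsep hinj ht hs h,
    fun R hR S hS => ?_⟩
  have hS' := funext ((barMapsTo_prefixMap_iff E).mp hS)
  subst hS'
  have key := (ite_mem_c00_eq (hrun hR) le_rfl).trans (hval hR le_rfl)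
  simp only [fraisseGame, Set.mem_inter_iff, hrun hR, and_true]
  split_ifs at key <;> simp_all

end Embeddings

section Fraisse

variable {M : Type u}

theorem exists_isGameEmbedding_fraisseGame (H : Game M) (hH : H.IsFin) :
    ∃ (m : ℕ) (g : List M → List ℕ), IsGameEmbedding H (fraisseGame m) g := by
  classical
  obtain ⟨N, hN⟩ := exists_injOn_runPrefix hH
  obtain ⟨r, c, hcr, hc⟩ := H.exists_levelCode hH
  refine ⟨N + r, _, isGameEmbedding_prefixMap_fraisseGame H (injOn_runPrefix_of_le hN (by omega))
    (fun u => if u.length ≤ N + r then c u else H.lossIndicator u) ?_ ?_ ?_⟩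
  · intro u hu hum
    simp only [if_pos hum]
    exact ((hcr u hu).trans_le (Nat.le_add_left r N)).le
  · intro u hu v hv hum huv _ he
    simp only [if_pos hum, if_pos (huv ▸ hum)] at he
    exact hc u hu v hv huv he
  · intro u _ hmu
    simp only [if_neg (Nat.not_le.mpr hmu)]

lemma getLastD_le_of_mem_fraisseTree {n : ℕ} {t : List ℕ} (ht : t ∈ fraisseTree n) :
    t.getLastD 0 ≤ n + 1 := by
  rcases Nat.eq_zero_or_pos t.length with h0 | hpos
  · simp [List.length_eq_zero_iff.mp h0]
  rw [getLastD_eq_getD]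
  have hi : t.length - 1 < t.length := by omega
  rcases lt_or_ge (t.length - 1) n with hn | hn
  · exact ((ht _ hi).1 hn).trans (Nat.le_succ n)
  · exact ((ht _ hi).2 hn).1.trans (by omega)

lemma lossIndicator_apply_eq_getLastD {H : Game M} {n l : ℕ} {f : List ℕ → List M}
    (hf : IsGameEmbedding (fraisseGame n) H f) (hl : Set.InjOn (runPrefix · l) (Runs H.tree))
    {t : List ℕ} (ht : t ∈ fraisseTree n) (hlt : l ≤ t.length) (hnt : n < t.length) :
    H.lossIndicator (f t) = t.getLastD 0 := by
  classical
  obtain ⟨W, hW, hWt⟩ := exists_mem_runs_fraisseTree_runPrefix_eq ht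
  obtain ⟨S, hS⟩ := hf.1.exists_barMapsTo hW
  have hwin : S ∈ H.payoff ↔ W ∈ c00 := by
    rw [← hf.2.2 W hW S hS]
    exact ⟨fun h => h.1, fun h => ⟨h, hW⟩⟩
  calc H.lossIndicator (f t) = H.lossIndicator (runPrefix S t.length) := by rw [hS, hWt]
    _ = if S ∈ H.payoff then 0 else 1 :=
      H.lossIndicator_runPrefix (injOn_runPrefix_of_le hl hlt) (hS.mem_runs hf.1 hW)
    _ = if W ∈ c00 then 0 else 1 := by simp only [hwin]
    _ = W (t.length - 1) := ite_mem_c00_eq hW (by omega)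
    _ = t.getLastD 0 := by rw [getLastD_eq_getD, ← hWt, runPrefix_getD _ (by simp; omega)]

theorem exists_isGameEmbedding_fraisseGame_comp_eq (H : Game M) (hH : H.IsFin) {n : ℕ}
    {f : List ℕ → List M} (hf : IsGameEmbedding (fraisseGame n) H f) :
    ∃ m, n ≤ m ∧ ∃ g : List M → List ℕ, IsGameEmbedding H (fraisseGame m) g ∧
      ∀ t ∈ fraisseTree n, g (f t) = t := by
  classical
  obtain ⟨N, hN⟩ := exists_injOn_runPrefix hH
  obtain ⟨r, c, hcr, hc⟩ := H.exists_levelCode hH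
  set T := fraisseTree n
  set m := n + r + N + 1
  have hfinj : Set.InjOn f T := fun t ht s hs => hf.2.1 t ht s hs
  have hflen {t : List ℕ} (ht : t ∈ T) : (f t).length = t.length := hf.1.2.1 t ht
  let g (u : List M) : List ℕ := Function.invFunOn f T u
  have hg {u : List M} (hu : u ∈ f '' T) : g u ∈ T ∧ f (g u) = u := Function.invFunOn_pos hu
  -- Codes start at `n + 2`, above every entry of a node of `fraisseTree n`.
  let E (u : List M) : ℕ :=
    if u.length ≤ m then if u ∈ f '' T then (g u).getLastD 0 else n + 2 + c u
    else H.lossIndicator u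
  have hEf {t : List ℕ} (ht : t ∈ T) : E (f t) = t.getLastD 0 := by
    by_cases htm : t.length ≤ m
    · simp only [E, hflen ht, if_pos htm, if_pos (Set.mem_image_of_mem f ht), g,
        hfinj.leftInvOn_invFunOn ht]
    · simp only [E, hflen ht, if_neg htm]
      exact lossIndicator_apply_eq_getLastD hf hN ht (by omega) (by omega)
  refine ⟨m, by omega, prefixMap E, isGameEmbedding_prefixMap_fraisseGame H
    (injOn_runPrefix_of_le hN (by omega)) E ?_ ?_ ?_, fun t ht => ?_⟩
  · intro u hu hum
    simp only [E, if_pos hum]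
    split_ifs with him
    · exact (getLastD_le_of_mem_fraisseTree (hg him).1).trans (by omega)
    · have := hcr u hu
      omega
  · intro u hu v hv hum huv hdrop hE
    simp only [E, if_pos hum, if_pos (huv ▸ hum)] at hE
    split_ifs at hE with hu' hv' hv'
    · obtain ⟨hpT, hpu⟩ := hg hu'
      obtain ⟨hqT, hqv⟩ := hg hv'
      rw [← hpu, ← hqv] at hdrop huv ⊢
      rw [hf.eq_of_dropLast_apply_eq hpT hqT (by rw [← hflen hpT, ← hflen hqT, huv]) hdrop hE]
    · have := getLastD_le_of_mem_fraisseTree (hg hu').1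
      omega
    · have := getLastD_le_of_mem_fraisseTree (hg hv').1
      omega
    · exact hc u hu v hv huv (by omega)
  · intro u _ hmu
    simp only [E, if_neg (Nat.not_le.mpr hmu)]
  · apply List.ext_getElem (by simp [hflen ht])
    intro i hi _
    have hit : i < t.length := by simpa [hflen ht] using hi
    rw [prefixMap_getElem, ← hf.1.2.2 t ht, hEf ((isGameTree_fraisseTree n).1 t ht _),
      getLastD_eq_getD]
    simp [hit]

end Fraisse

section Colimit

lemma iterComp_id {α : Type u} (n m : ℕ) : iterComp (fun _ => (id : α → α)) n m = id := by
  induction m with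
  | zero => rfl
  | succ m ih =>
    simp only [iterComp, ih]
    split <;> rfl

theorem isGamesACoconeColimit_id {M : Type u} (G : ℕ → Game M) (L : Game M)
    (hmono : ∀ n, (G n).tree ⊆ (G (n + 1)).tree) (htree : ⋃ n, (G n).tree = L.tree)
    (hpayoff : L.payoff ⊆ ⋃ n, (G n).payoff) :
    IsGamesACoconeColimit G (fun _ => id) L (fun _ => id) := by
  classical
  intro P H h hmor hcocone
  have hagree {a b : ℕ} {t : List M} (ha : t ∈ (G a).tree) (hb : t ∈ (G b).tree) :
      h a t = h b t := by
    wlog hab : a ≤ b generalizing a b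
    · exact (this hb ha (le_of_not_ge hab)).symm
    induction b, hab using Nat.le_induction with
    | base => rfl
    | succ b hab ih =>
      have htb : t ∈ (G b).tree := monotone_nat_of_le_succ hmono hab ha
      rw [ih htb, ← hcocone b t htb]
      rfl
  have hL {t : List M} : t ∈ L.tree ↔ ∃ n, t ∈ (G n).tree := by rw [← htree, Set.mem_iUnion]
  let k (t : List M) : List P := if ht : ∃ n, t ∈ (G n).tree then h ht.choose t else []
  have hk {n : ℕ} {t : List M} (ht : t ∈ (G n).tree) : k t = h n t := by
    have hex : ∃ n, t ∈ (G n).tree := ⟨n, ht⟩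
    simp only [k, dif_pos hex]
    exact hagree hex.choose_spec ht
  have hkmor : IsAMorphism L H k := by
    refine ⟨⟨fun t ht => ?_, fun t ht => ?_, fun t ht j => ?_⟩, fun R hR S hS => ?_⟩
    · obtain ⟨n, hn⟩ := hL.mp ht
      exact hk hn ▸ (hmor n).1.1 t hn
    · obtain ⟨n, hn⟩ := hL.mp ht
      exact hk hn ▸ (hmor n).1.2.1 t hn
    · obtain ⟨n, hn⟩ := hL.mp ht
      rw [hk hn, hk ((G n).isGameTree.1 t hn j), (hmor n).1.2.2 t hn j]
    · obtain ⟨n, hn⟩ := Set.mem_iUnion.mp (hpayoff hR)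
      refine (hmor n).2 R hn S fun j => ?_
      rw [hS j, hk ((G n).payoff_subset hn j)]
  refine ⟨k, hkmor, fun n t ht => hk ht, fun k' _ hk' t ht => ?_⟩
  obtain ⟨n, hn⟩ := hL.mp ht
  rw [hk hn]
  exact hk' n t hn

end Colimit

/-- there is a Fraïssé sequence of finite games whose colimit in
`Games_A` is `G_FL`. -/
theorem exists_fraisse_sequence_finite_games_colimit_GFL :
    ∃ (G : ℕ → Game ℕ) (e : ℕ → List ℕ → List ℕ),
      (∀ n, (G n).IsFin) ∧
      (∀ n, IsGameEmbedding (G n) (G (n + 1)) (e n)) ∧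
      -- (U): every finite game embeds into some `G n`
      (∀ (M : Type u) (H : Game M), H.IsFin →
        ∃ (n : ℕ) (g : List M → List ℕ), IsGameEmbedding H (G n) g) ∧
      -- (A): the amalgamation property of the sequence
      (∀ (n : ℕ) (M : Type u) (H : Game M), H.IsFin →
        ∀ f : List ℕ → List M, IsGameEmbedding (G n) H f →
          ∃ m : ℕ, n ≤ m ∧ ∃ g : List M → List ℕ, IsGameEmbedding H (G m) g ∧
            ∀ t ∈ (G n).tree, g (f t) = iterComp e n m t) ∧
      -- the cocone of embeddings into `G_FL` and its colimit properties
      ∃ f : ℕ → List ℕ → List ℕ,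
        (∀ n, IsGameEmbedding (G n) GFL (f n)) ∧
        (∀ n, ∀ t ∈ (G n).tree, f (n + 1) (e n t) = f n t) ∧
        (⋃ n, f n '' (G n).tree) = (Set.univ : Set (List ℕ)) ∧
        {Z : ℕ → ℕ | ∃ n, ∃ R ∈ (G n).payoff, BarMapsTo (f n) R Z} = c00 ∧
        IsGamesACoconeColimit G e GFL f := by
  have hpayoff : c00 ⊆ ⋃ n, (fraisseGame n).payoff := fun _ hR =>
    Set.mem_iUnion.mpr (exists_mem_fraisseGame_payoff hR)
  refine ⟨fraisseGame, fun _ => id, fraisseGame_isFin,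
    fun n => (fraisseGame_sub_of_le n.le_succ).isGameEmbedding_id,
    fun M H hH => exists_isGameEmbedding_fraisseGame H hH, fun n M H hH f hf => ?_, fun _ => id,
    fun n => (fraisseGame_sub_GFL n).isGameEmbedding_id, fun _ _ _ => rfl,
    by simp only [Set.image_id]; exact iUnion_fraisseTree, ?_,
    isGamesACoconeColimit_id _ _ (fun n => fraisseTree_mono n.le_succ) iUnion_fraisseTree hpayoff⟩
  · obtain ⟨m, hnm, g, hg, hgf⟩ := exists_isGameEmbedding_fraisseGame_comp_eq H hH hf
    exact ⟨m, hnm, g, hg, fun t ht => by rw [iterComp_id]; exact hgf t ht⟩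
  · ext Z
    simp only [barMapsTo_id_iff, exists_eq_right', Set.mem_ofPred_eq]
    exact ⟨fun ⟨n, hn⟩ => hn.1, fun hZ => Set.mem_iUnion.mp (hpayoff hZ)⟩

end FraisseGames
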